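/- arXiv:2103.16208 — 3 statements merged into one kernel-verified Lean document; each statement's English description precedes it below -/
import Mathlib

section
/- Let k ≤ n be positive integers, 1 ≤ ℓ ≤ n-1, and v ≤ w in I_{k,n}. Let T = (I,J) be a two-column semi-standard Young tableau with entries in [n] and let (I',J') = Γ_ℓ(I,J). Then (v ≤ I ≤ w and v ≤ J ≤ w) holds if and only if (v ≤ I' ≤ w and v ≤ J' ≤ w) holds; equivalently, T vanishes on the Richardson data (v,w) if and only if Γ_ℓ(T) does. -/
open MvPolynomial

/-- `IsIdx n k J` : `J` is a strictly increasing `k`-tuple with entries in `{1, …, n}`,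
representing an element `{J 0 < J 1 < … < J (k-1)}` of `I_{k,n}`. -/
def IsIdx (n k : ℕ) (J : Fin k → ℕ) : Prop :=
  StrictMono J ∧ ∀ s, 1 ≤ J s ∧ J s ≤ n

/-- Componentwise (Bruhat) order on sorted tuples. -/
def TupLe {k : ℕ} (I J : Fin k → ℕ) : Prop := ∀ s, I s ≤ J s

/-- Index type of the Plücker variables `P_I`, `I ∈ I_{k,n}`. -/
def PlVar (n k : ℕ) : Type := {J : Fin k → ℕ // IsIdx n k J}

/-- The number of entries of `J` lying in `{1, …, ℓ}`. -/
def nSmall {k : ℕ} (ℓ : ℕ) (J : Fin k → ℕ) : ℕ :=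
  (Finset.univ.filter fun s => J s ≤ ℓ).card

/-- Row assignment of the block diagonal matching field `B_ℓ` : the entry of `J` in sorted
position `i` (0-indexed) is placed in this (1-indexed) row. -/
def mfRow {k : ℕ} (ℓ : ℕ) (J : Fin k → ℕ) (i : Fin k) : ℕ :=
  if 2 ≤ k ∧ nSmall ℓ J = 1 then
    (if (i : ℕ) = 0 then 2 else if (i : ℕ) = 1 then 1 else (i : ℕ) + 1)
  else (i : ℕ) + 1

/-- The monomial map `φ_ℓ` of the block diagonal matching field `B_ℓ`. -/
noncomputable def phiMF (K : Type*) [Field K] (n k ℓ : ℕ) :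
    MvPolynomial (PlVar n k) K →ₐ[K] MvPolynomial (ℕ × ℕ) K :=
  aeval fun J => ∏ i : Fin k, X (mfRow ℓ J.val i, J.val i)

/-- The Plücker map, sending `P_J` to the `k × k` minor on columns `J`
of the generic matrix `(x_{i,j})`. -/
noncomputable def pluMap (K : Type*) [Field K] (n k : ℕ) :
    MvPolynomial (PlVar n k) K →ₐ[K] MvPolynomial (ℕ × ℕ) K :=
  aeval fun J =>
    (Matrix.of fun r c : Fin k => (X ((r : ℕ) + 1, J.val c) : MvPolynomial (ℕ × ℕ) K)).det

/-- Restriction `G|_T = (G + ⟨P_I : I ∉ T⟩) ∩ K[P_I : I ∈ T]` of an ideal to the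
variables indexed by `T`. -/
noncomputable def restrictIdeal {K : Type*} [Field K] {n k : ℕ}
    (G : Ideal (MvPolynomial (PlVar n k) K)) (T : Set (PlVar n k)) :
    Ideal (MvPolynomial T K) :=
  Ideal.comap (rename fun x : T => (x : PlVar n k))
    (G ⊔ Ideal.span (X '' {J | J ∉ T}))

/-- An ideal of a polynomial ring is monomial-free if it contains no monomial. -/
def MonomialFree {K : Type*} [Field K] {σ : Type*} (I : Ideal (MvPolynomial σ K)) : Prop :=
  ∀ m : σ →₀ ℕ, (monomial m (1 : K)) ∉ I

/-- `T_w^v = {I ∈ I_{k,n} : v ≤ I ≤ w}`. -/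
def TWV {n k : ℕ} (v w : PlVar n k) : Set (PlVar n k) :=
  {J | TupLe v.val J.val ∧ TupLe J.val w.val}

/-- `{I ∈ I_{k,n} : I ≤ w}`. -/
def TleW {n k : ℕ} (w : PlVar n k) : Set (PlVar n k) := {J | TupLe J.val w.val}

/-- `{I ∈ I_{k,n} : v ≤ I}`. -/
def TgeV {n k : ℕ} (v : PlVar n k) : Set (PlVar n k) := {J | TupLe v.val J.val}

/-- The weight matrix `M_ℓ` (rows and columns 1-indexed). -/
def Mmat (n ℓ : ℕ) (i j : ℕ) : ℤ :=
  if i = 2 then (if j ≤ ℓ then (ℓ : ℤ) - j + 1 else (n : ℤ) - j + ℓ + 1)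
  else ((i : ℤ) - 1) * ((n : ℤ) - j + 1)

/-- The weight `w_ℓ(P_J)` induced by `M_ℓ` on the Plücker variable `P_J`. -/
def wVec (n ℓ : ℕ) {k : ℕ} (J : Fin k → ℕ) : ℤ :=
  ∑ i : Fin k, Mmat n ℓ (mfRow ℓ J i) (J i)

/-- Weight of an exponent vector with respect to a weight vector `u`. -/
def expWt {σ : Type*} (u : σ → ℤ) (m : σ →₀ ℕ) : ℤ := m.sum fun i e => u i * (e : ℤ)

/-- Initial form of a polynomial: the sum of its terms of minimal `u`-weight. -/
noncomputable def initialForm {K σ : Type*} [Field K] (u : σ → ℤ) (f : MvPolynomial σ K) :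
    MvPolynomial σ K :=
  ∑ m ∈ f.support.filter (fun m => ∀ m' ∈ f.support, expWt u m ≤ expWt u m'),
    monomial m (coeff m f)

/-- Initial ideal with respect to the weight vector `u`. -/
noncomputable def initialIdeal {K σ : Type*} [Field K] (u : σ → ℤ)
    (I : Ideal (MvPolynomial σ K)) : Ideal (MvPolynomial σ K) :=
  Ideal.span {g | ∃ f ∈ I, g = initialForm u f}

/-- `w_0 I = {n + 1 - i : i ∈ I}`, as a sorted tuple. -/
def w0t (n : ℕ) {k : ℕ} (I : Fin k → ℕ) : Fin k → ℕ :=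
  fun s => n + 1 - I ⟨k - 1 - (s : ℕ), by have := s.isLt; omega⟩

/-- Membership in `Z_{k,n}` : either `J = {1, …, k-1, i}` with `k ≤ i ≤ n`,
or `J = {1, …, k+1} \\ {i}` with `1 ≤ i ≤ k-1`. -/
def ZPred (n k : ℕ) (J : Fin k → ℕ) : Prop :=
  (∃ i, k ≤ i ∧ i ≤ n ∧
    ∀ s : Fin k, J s = if (s : ℕ) + 1 < k then (s : ℕ) + 1 else i) ∨
  (∃ i, 1 ≤ i ∧ i ≤ k - 1 ∧
    ∀ s : Fin k, J s = if (s : ℕ) + 1 < i then (s : ℕ) + 1 else (s : ℕ) + 2)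

/-- A two-column semi-standard Young tableau with columns `I`, `J`. -/
def SSYT (n k : ℕ) (I J : Fin k → ℕ) : Prop :=
  IsIdx n k I ∧ IsIdx n k J ∧ ∀ s, I s ≤ J s

/-- The map `Γ_ℓ` on two-column semi-standard Young tableaux (columns as sorted tuples). -/
def Gamma (ℓ : ℕ) {k : ℕ} (I J : Fin k → ℕ) : (Fin k → ℕ) × (Fin k → ℕ) :=
  if h : 2 ≤ k then
    let i0 := I ⟨0, by omega⟩
    let i1 := I ⟨1, by omega⟩
    let j0 := J ⟨0, by omega⟩
    let j1 := J ⟨1, by omega⟩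
    if (i0 ≤ ℓ ∧ i1 ≤ ℓ ∧ j0 ≤ ℓ ∧ ℓ < j1 ∧ i0 < j0 ∧ j0 < i1) ∨
       (i0 ≤ ℓ ∧ ℓ < i1 ∧ ℓ < j0 ∧ ℓ < j1 ∧ j0 < i1 ∧ i1 < j1) then
      ((fun s => if (s : ℕ) = 0 then j0 else I s), (fun s => if (s : ℕ) = 0 then i0 else J s))
    else (I, J)
  else (I, J)

/-- A column (a `k`-subset given as a sorted tuple) displayed in `B_ℓ`-order:
when `k ≥ 2` and exactly one entry is `≤ ℓ`, the two smallest entries are swapped. -/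
def rowArrange (ℓ : ℕ) {k : ℕ} (C : Fin k → ℕ) : Fin k → ℕ :=
  if h : 2 ≤ k then
    (if nSmall ℓ C = 1 then
      fun s => if (s : ℕ) = 0 then C ⟨1, by omega⟩
        else if (s : ℕ) = 1 then C ⟨0, by omega⟩ else C s
    else C)
  else C

/-- Two two-column tableaux (with columns `A,B` resp. `C,D`) are row-wise equal. -/
def rowEq {k : ℕ} (A B C D : Fin k → ℕ) : Prop :=
  ∀ s, ({A s, B s} : Multiset ℕ) = {C s, D s}

/-- The kernel of the restricted monomial map `φ_ℓ|_T`. -/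
noncomputable def kerPhiRes (K : Type*) [Field K] (n k ℓ : ℕ) (T : Set (PlVar n k)) :
    Ideal (MvPolynomial T K) :=
  RingHom.ker ((phiMF K n k ℓ).comp (rename fun x : T => (x : PlVar n k)))

/-- The ideal `I(X_w^v)` of the Richardson variety: the restriction of the
Plücker ideal `G_{k,n}` to the variables in `T_w^v`. -/
noncomputable def richIdeal (K : Type*) [Field K] (n k : ℕ) (v w : PlVar n k) :
    Ideal (MvPolynomial (TWV v w) K) :=
  restrictIdeal (RingHom.ker (pluMap K n k)) (TWV v w)

/-- Let `T = (I, J)` be a two-column semi-standard Young tableau and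
`(I', J') = Γ_ℓ(I, J)`. Then `v ≤ I, J ≤ w` holds if and only if `v ≤ I', J' ≤ w` holds;
i.e. `T` vanishes on the Richardson data `(v, w)` iff `Γ_ℓ(T)` does. -/
theorem statement_13 (n k ℓ : ℕ) (hk : 0 < k) (hkn : k ≤ n)
    (hℓ1 : 1 ≤ ℓ) (hℓ2 : ℓ ≤ n - 1)
    (v w : Fin k → ℕ) (hv : IsIdx n k v) (hw : IsIdx n k w) (hvw : TupLe v w)
    (I J : Fin k → ℕ) (hT : SSYT n k I J) :
    (TupLe v I ∧ TupLe I w ∧ TupLe v J ∧ TupLe J w) ↔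
      (TupLe v (Gamma ℓ I J).1 ∧ TupLe (Gamma ℓ I J).1 w ∧
       TupLe v (Gamma ℓ I J).2 ∧ TupLe (Gamma ℓ I J).2 w) := by
  unfold Gamma
  split_ifs with h
  · dsimp only
    split
    · constructor
      · rintro ⟨h1, h2, h3, h4⟩
        refine ⟨fun s => ?_, fun s => ?_, fun s => ?_, fun s => ?_⟩ <;>
          by_cases hs : (s : ℕ) = 0
        · rw [show s = (⟨0, hk⟩ : Fin k) from Fin.ext hs]
          simpa using h3 ⟨0, hk⟩
        · simpa [hs] using h1 s
        · rw [show s = (⟨0, hk⟩ : Fin k) from Fin.ext hs]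
          simpa using h4 ⟨0, hk⟩
        · simpa [hs] using h2 s
        · rw [show s = (⟨0, hk⟩ : Fin k) from Fin.ext hs]
          simpa using h1 ⟨0, hk⟩
        · simpa [hs] using h3 s
        · rw [show s = (⟨0, hk⟩ : Fin k) from Fin.ext hs]
          simpa using h2 ⟨0, hk⟩
        · simpa [hs] using h4 s
      · rintro ⟨h1, h2, h3, h4⟩
        refine ⟨fun s => ?_, fun s => ?_, fun s => ?_, fun s => ?_⟩ <;>
          by_cases hs : (s : ℕ) = 0
        · rw [show s = (⟨0, hk⟩ : Fin k) from Fin.ext hs]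
          simpa using h3 ⟨0, hk⟩
        · simpa [hs] using h1 s
        · rw [show s = (⟨0, hk⟩ : Fin k) from Fin.ext hs]
          simpa using h4 ⟨0, hk⟩
        · simpa [hs] using h2 s
        · rw [show s = (⟨0, hk⟩ : Fin k) from Fin.ext hs]
          simpa using h1 ⟨0, hk⟩
        · simpa [hs] using h3 s
        · rw [show s = (⟨0, hk⟩ : Fin k) from Fin.ext hs]
          simpa using h2 ⟨0, hk⟩
        · simpa [hs] using h4 s
    · exact Iff.rfl
  · exact Iff.rfl
end

section
/- Let k < n be positive integers, K a field, 1 ≤ ℓ ≤ n-1, and v ≤ w in I_{k,n}. Suppose the restricted ideal G_{k,n,ℓ}|_w^v = ker(φ_ℓ)|_{T_w^v} is monomial-free. Then the map sending a two-column semi-standard Young tableau (I,J) with v ≤ I ≤ w and v ≤ J ≤ w to the degree-two monomial P_{I'} P_{J'}, where (I',J') = Γ_ℓ(I,J), is injective (monomials being regarded as unordered products). Consequently the set Im(Γ_ℓ)|_w^v of such monomials has cardinality equal to the number of two-column semi-standard Young tableaux with both columns I, J satisfying v ≤ I, J ≤ w. -/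
open MvPolynomial

theorem my_pair_eq {α : Type*} {a b c d : α} (h : ({a, b} : Multiset α) = {c, d}) :
    a = c ∧ b = d ∨ a = d ∧ b = c := by
  have h' : a ::ₘ {b} = c ::ₘ {d} := h
  rw [Multiset.cons_eq_cons] at h'
  rcases h' with ⟨h1, h2⟩ | ⟨h1, cs, h2, h3⟩
  · exact Or.inl ⟨h1, Multiset.singleton_inj.mp h2⟩
  · rw [Multiset.singleton_eq_cons_iff] at h2 h3
    exact Or.inr ⟨h3.1.symm, h2.1⟩

theorem my_gamma_cases (ℓ : ℕ) {k : ℕ} (I J : Fin k → ℕ) :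
    Gamma ℓ I J = (I, J) ∨
    (2 ≤ k ∧ ∀ (h0 : 0 < k) (h1 : 1 < k),
      Gamma ℓ I J =
        ((fun s : Fin k => if (s : ℕ) = 0 then J ⟨0, h0⟩ else I s),
         (fun s : Fin k => if (s : ℕ) = 0 then I ⟨0, h0⟩ else J s)) ∧
      I ⟨0, h0⟩ < J ⟨0, h0⟩ ∧ I ⟨1, h1⟩ < J ⟨1, h1⟩) := by
  unfold Gamma
  split
  · rename_i hk2
    dsimp only
    split
    · rename_i hc
      right
      refine ⟨hk2, fun h0 h1 => ⟨rfl, ?_, ?_⟩⟩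
      · rcases hc with h | h
        · exact h.2.2.2.2.1
        · exact lt_of_le_of_lt h.1 h.2.2.1
      · rcases hc with h | h
        · exact lt_of_le_of_lt h.2.1 h.2.2.2.1
        · exact h.2.2.2.2.2
    · exact Or.inl rfl
  · exact Or.inl rfl

/-- Suppose `G_{k,n,ℓ}|_w^v` is monomial-free. Then the map sending a
two-column semi-standard Young tableau `(I, J)` with `v ≤ I, J ≤ w` to the unordered
product (the multiset of columns) of `Γ_ℓ(I, J)` is injective; consequently the set
`Im(Γ_ℓ)|_w^v` of these degree-two monomials has cardinality equal to the number of
two-column semi-standard Young tableaux with both columns between `v` and `w`. -/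
theorem statement_15 (K : Type*) [Field K] (n k ℓ : ℕ) (hk : 0 < k) (hkn : k < n)
    (hℓ1 : 1 ≤ ℓ) (hℓ2 : ℓ ≤ n - 1)
    (v w : PlVar n k) (hvw : TupLe v.val w.val)
    (hmf : MonomialFree (restrictIdeal (RingHom.ker (phiMF K n k ℓ)) (TWV v w))) :
    Set.InjOn
      (fun p : (Fin k → ℕ) × (Fin k → ℕ) =>
        ({(Gamma ℓ p.1 p.2).1, (Gamma ℓ p.1 p.2).2} : Multiset (Fin k → ℕ)))
      {p | SSYT n k p.1 p.2 ∧ TupLe v.val p.1 ∧ TupLe p.1 w.val ∧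
            TupLe v.val p.2 ∧ TupLe p.2 w.val} ∧
    ((fun p : (Fin k → ℕ) × (Fin k → ℕ) =>
        ({(Gamma ℓ p.1 p.2).1, (Gamma ℓ p.1 p.2).2} : Multiset (Fin k → ℕ))) ''
      {p | SSYT n k p.1 p.2 ∧ TupLe v.val p.1 ∧ TupLe p.1 w.val ∧
            TupLe v.val p.2 ∧ TupLe p.2 w.val}).ncard =
      {p : (Fin k → ℕ) × (Fin k → ℕ) |
        SSYT n k p.1 p.2 ∧ TupLe v.val p.1 ∧ TupLe p.1 w.val ∧
          TupLe v.val p.2 ∧ TupLe p.2 w.val}.ncard := by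
  have h0k : 0 < k := hk
  have hinj : Set.InjOn
      (fun p : (Fin k → ℕ) × (Fin k → ℕ) =>
        ({(Gamma ℓ p.1 p.2).1, (Gamma ℓ p.1 p.2).2} : Multiset (Fin k → ℕ)))
      {p | SSYT n k p.1 p.2 ∧ TupLe v.val p.1 ∧ TupLe p.1 w.val ∧
            TupLe v.val p.2 ∧ TupLe p.2 w.val} := by
    rintro ⟨I, J⟩ ⟨⟨-, -, hIJ⟩, -⟩ ⟨I', J'⟩ ⟨⟨-, -, hIJ'⟩, -⟩ h
    dsimp only at h hIJ hIJ' ⊢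
    rcases my_gamma_cases ℓ I J with h1 | ⟨hk2, h1⟩ <;>
      rcases my_gamma_cases ℓ I' J' with h2 | ⟨hk2', h2⟩
    · -- both identity
      rw [h1, h2] at h
      dsimp only at h
      rcases my_pair_eq h with ⟨e1, e2⟩ | ⟨e1, e2⟩
      · exact Prod.ext e1 e2
      · have e3 : I = I' :=
          funext fun s => le_antisymm (by rw [← e2]; exact hIJ s) (by rw [e1]; exact hIJ' s)
        have e4 : J = J' := e2.trans (e3.symm.trans e1)
        exact Prod.ext e3 e4
    · -- first identity, second swap
      exfalso
      have h1k : 1 < k := by omega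
      obtain ⟨hG, hlt0, hlt1⟩ := h2 h0k h1k
      rw [h1, hG] at h
      dsimp only at h
      rcases my_pair_eq h with ⟨e1, e2⟩ | ⟨e1, e2⟩
      · have := hIJ ⟨0, h0k⟩
        rw [e1, e2] at this
        simp at this
        omega
      · have := hIJ ⟨1, h1k⟩
        rw [e1, e2] at this
        simp at this
        omega
    · -- first swap, second identity
      exfalso
      have h1k : 1 < k := by omega
      obtain ⟨hG, hlt0, hlt1⟩ := h1 h0k h1k
      rw [hG, h2] at h
      dsimp only at h
      rcases my_pair_eq h with ⟨e1, e2⟩ | ⟨e1, e2⟩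
      · have := hIJ' ⟨0, h0k⟩
        rw [← e1, ← e2] at this
        simp at this
        omega
      · have := hIJ' ⟨1, h1k⟩
        rw [← e1, ← e2] at this
        simp at this
        omega
    · -- both swap
      have h1k : 1 < k := by omega
      obtain ⟨hG1, hlt0, hlt1⟩ := h1 h0k h1k
      obtain ⟨hG2, hlt0', hlt1'⟩ := h2 h0k h1k
      rw [hG1, hG2] at h
      dsimp only at h
      rcases my_pair_eq h with ⟨e1, e2⟩ | ⟨e1, e2⟩
      · have eI : I = I' := by
          funext s
          by_cases hs : (s : ℕ) = 0
          · have hs0 : s = ⟨0, h0k⟩ := Fin.ext hs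
            have := congrFun e2 s
            simp [hs] at this
            rw [hs0]
            exact this
          · have := congrFun e1 s
            simpa [hs] using this
        have eJ : J = J' := by
          funext s
          by_cases hs : (s : ℕ) = 0
          · have hs0 : s = ⟨0, h0k⟩ := Fin.ext hs
            have := congrFun e1 s
            simp [hs] at this
            rw [hs0]
            exact this
          · have := congrFun e2 s
            simpa [hs] using this
        exact Prod.ext eI eJ
      · exfalso
        have c1 := congrFun e1 ⟨0, h0k⟩
        have c2 := congrFun e2 ⟨0, h0k⟩
        simp at c1 c2
        omega
  refine ⟨hinj, Set.ncard_image_of_injOn hinj⟩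
end

section
/- Let k < n be positive integers, K a field, 0 ≤ ℓ ≤ n, and v ≤ w in I_{k,n}. The restricted ideal G_{k,n,ℓ}|_w^v = ker(φ_ℓ)|_{T_w^v} coincides with the kernel ker(φ_ℓ|_w^v) of the restricted monomial map if and only if G_{k,n,ℓ}|_w^v is monomial-free. -/
open MvPolynomial

/-!
Both maps `φ_ℓ` and `φ_ℓ|_w^v` are monomial maps, and the kernel of a monomial map contains no
monomial; this gives one direction, and `ker(φ_ℓ|_w^v) ⊆ G|_w^v` always holds. Conversely, if
`f ∈ G|_w^v` is not killed by `φ_ℓ|_w^v`, write `f = p + h` with `φ_ℓ(p) = 0` and `h` in the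
ideal of the variables outside `T_w^v`. A monomial `x^m` of `φ_ℓ(f) = φ_ℓ(h)` is the image of a
monomial `P^μ` of `f` and of a monomial `P^ν` of `h`; then `P^μ = (P^μ - P^ν) + P^ν` is a monomial
in `G|_w^v`.
-/

section MonomialMap

variable (K : Type*) [CommSemiring K] {σ τ : Type*}

noncomputable abbrev monomialMap (g : σ → τ →₀ ℕ) : MvPolynomial σ K →ₐ[K] MvPolynomial τ K :=
  aeval fun j => monomial (g j) 1

variable {K}

theorem monomialMap_monomial (g : σ → τ →₀ ℕ) (μ : σ →₀ ℕ) (c : K) :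
    monomialMap K g (monomial μ c) = monomial (Finsupp.linearCombination ℕ g μ) c := by
  simp only [aeval_monomial, monomial_pow, one_pow, Finsupp.linearCombination_apply,
    monomial_finsupp_sum_index, algebraMap_eq]

theorem monomialMap_comp_rename {υ : Type*} (g : σ → τ →₀ ℕ) (f : υ → σ) :
    (monomialMap K g).comp (rename f) = monomialMap K (g ∘ f) :=
  algHom_ext fun _ => by simp

theorem monomial_one_notMem_ker_monomialMap [Nontrivial K] (g : σ → τ →₀ ℕ) (μ : σ →₀ ℕ) :
    monomial μ (1 : K) ∉ RingHom.ker (monomialMap K g) := by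
  rw [RingHom.mem_ker, monomialMap_monomial, monomial_eq_zero]
  exact one_ne_zero

theorem exists_mem_support_of_mem_support_monomialMap {g : σ → τ →₀ ℕ}
    {p : MvPolynomial σ K} {m : τ →₀ ℕ} (hm : m ∈ (monomialMap K g p).support) :
    ∃ μ ∈ p.support, Finsupp.linearCombination ℕ g μ = m := by
  classical
  contrapose! hm
  rw [MvPolynomial.notMem_support_iff, p.as_sum, map_sum, coeff_sum]
  refine Finset.sum_eq_zero fun μ hμ => ?_
  rw [monomialMap_monomial, coeff_monomial, if_neg (hm μ hμ)]

theorem monomial_one_mem_span_X_image {S : Set σ} {μ : σ →₀ ℕ} (h : ∃ j ∈ S, μ j ≠ 0) :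
    monomial μ (1 : K) ∈ Ideal.span (X '' S) := by
  rw [mem_ideal_span_X_image]
  intro ν hν
  rwa [Finset.mem_singleton.mp (support_monomial_subset hν)]

end MonomialMap

section Restriction

variable {K : Type*} [Field K] {σ τ : Type*} (g : σ → τ →₀ ℕ) (T : Set σ)

theorem ker_comp_rename_le_comap_rename_ker_sup {υ R : Type*} [Semiring R] [Algebra K R]
    (f : υ → σ) (φ : MvPolynomial σ K →ₐ[K] R) (I : Ideal (MvPolynomial σ K)) :
    RingHom.ker (φ.comp (rename f)) ≤ Ideal.comap (rename f) (RingHom.ker φ ⊔ I) :=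
  fun _ hf => Ideal.mem_sup_left (by simpa using hf)

theorem exists_monomial_one_mem_comap_rename_ker_sup_span {f : MvPolynomial T K}
    (hf : f ∈ Ideal.comap (rename ((↑) : T → σ))
      (RingHom.ker (monomialMap K g) ⊔ Ideal.span (X '' Tᶜ)))
    (hne : monomialMap K g (rename (↑) f) ≠ 0) :
    ∃ μ, monomial μ (1 : K) ∈ Ideal.comap (rename ((↑) : T → σ))
      (RingHom.ker (monomialMap K g) ⊔ Ideal.span (X '' Tᶜ)) := by
  obtain ⟨p, hp, h, hh, hsum⟩ := Submodule.mem_sup.mp hf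
  obtain ⟨m, hm⟩ := ne_zero_iff.mp hne
  have hmh : m ∈ (monomialMap K g h).support := by
    rwa [mem_support_iff, ← zero_add (monomialMap K g h), ← RingHom.mem_ker.mp hp, ← map_add,
      hsum]
  obtain ⟨ν, hν, rfl⟩ := exists_mem_support_of_mem_support_monomialMap hmh
  rw [← AlgHom.comp_apply, monomialMap_comp_rename] at hm
  obtain ⟨μ, -, hμ⟩ := exists_mem_support_of_mem_support_monomialMap (mem_support_iff.mpr hm)
  have hdiff : rename (↑) (monomial μ 1) - monomial ν 1 ∈ RingHom.ker (monomialMap K g) := by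
    rw [RingHom.mem_ker, map_sub, ← AlgHom.comp_apply, monomialMap_comp_rename,
      monomialMap_monomial, monomialMap_monomial, hμ, sub_self]
  have hspan : monomial ν (1 : K) ∈ Ideal.span (X '' Tᶜ) :=
    monomial_one_mem_span_X_image (mem_ideal_span_X_image.mp hh ν hν)
  exact ⟨μ, by simpa using Submodule.add_mem_sup hdiff hspan⟩

theorem comap_rename_ker_sup_span_le_of_monomialFree
    (hfree : MonomialFree (Ideal.comap (rename ((↑) : T → σ))
      (RingHom.ker (monomialMap K g) ⊔ Ideal.span (X '' Tᶜ)))) :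
    Ideal.comap (rename ((↑) : T → σ)) (RingHom.ker (monomialMap K g) ⊔ Ideal.span (X '' Tᶜ)) ≤
      RingHom.ker ((monomialMap K g).comp (rename ((↑) : T → σ))) := by
  intro f hf
  by_contra hne
  obtain ⟨μ, hμ⟩ := exists_monomial_one_mem_comap_rename_ker_sup_span g T hf hne
  exact hfree μ hμ

theorem comap_rename_ker_sup_span_eq_ker_comp_rename_iff :
    Ideal.comap (rename ((↑) : T → σ)) (RingHom.ker (monomialMap K g) ⊔ Ideal.span (X '' Tᶜ)) =
        RingHom.ker ((monomialMap K g).comp (rename ((↑) : T → σ))) ↔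
      MonomialFree (Ideal.comap (rename ((↑) : T → σ))
        (RingHom.ker (monomialMap K g) ⊔ Ideal.span (X '' Tᶜ))) := by
  refine ⟨fun h => ?_, fun h => le_antisymm (comap_rename_ker_sup_span_le_of_monomialFree g T h)
    (ker_comp_rename_le_comap_rename_ker_sup _ _ _)⟩
  rw [h, monomialMap_comp_rename]
  exact monomial_one_notMem_ker_monomialMap _

end Restriction

theorem phiMF_eq_monomialMap (K : Type*) [Field K] (n k ℓ : ℕ) :
    phiMF K n k ℓ = monomialMap K fun J => ∑ i, Finsupp.single (mfRow ℓ J.val i, J.val i) 1 := by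
  refine congrArg aeval (funext fun J => ?_)
  rw [monomial_sum_one]
  rfl

theorem statement_16_general (K : Type*) [Field K] (n k ℓ : ℕ) (v w : PlVar n k) :
    restrictIdeal (RingHom.ker (phiMF K n k ℓ)) (TWV v w) = kerPhiRes K n k ℓ (TWV v w) ↔
      MonomialFree (restrictIdeal (RingHom.ker (phiMF K n k ℓ)) (TWV v w)) := by
  rw [restrictIdeal, kerPhiRes, phiMF_eq_monomialMap]
  exact comap_rename_ker_sup_span_eq_ker_comp_rename_iff _ _

/-- The restricted ideal `G_{k,n,ℓ}|_w^v = ker(φ_ℓ)|_{T_w^v}` coincides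
with the kernel `ker(φ_ℓ|_w^v)` of the restricted monomial map if and only if
`G_{k,n,ℓ}|_w^v` is monomial-free. -/
theorem statement_16 (K : Type*) [Field K] (n k ℓ : ℕ) (hk : 0 < k) (hkn : k < n)
    (hℓn : ℓ ≤ n) (v w : PlVar n k) (hvw : TupLe v.val w.val) :
    restrictIdeal (RingHom.ker (phiMF K n k ℓ)) (TWV v w) = kerPhiRes K n k ℓ (TWV v w) ↔
      MonomialFree (restrictIdeal (RingHom.ker (phiMF K n k ℓ)) (TWV v w)) :=
  statement_16_general K n k ℓ v w
end
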